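/- arXiv:2605.03654 — 5 statements merged into one kernel-verified Lean document; each statement's English description precedes it below -/
import Mathlib

section
/- If a clause state with bound n (relative to a CNF I and a trail τ) satisfies the representation invariant Inv3 and the closure invariant Inv4, then it satisfies the correctness invariant Inv2, i.e., N ↔ⁿ P: the active-non-temporary clauses and the pervasive clauses are n-equivalent. -/
/-- A variable is a natural number. -/
abbrev Var := ℕ

/-- A literal is a pair of a variable and a Boolean polarity. -/
abbrev Lit := Var × Bool

/-- The negation of a literal flips its polarity. -/
def Lit.neg (l : Lit) : Lit := (l.1, !l.2)

/-- A clause is a finite set of literals. -/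
abbrev Clause := Finset Lit

/-- A total assignment. -/
abbrev Assignment := Var → Bool

/-- A trail is a finite list of (literal, decision level) pairs. -/
abbrev Trail := List (Lit × ℕ)

/-- An assignment satisfies a literal `(v, b)` iff it assigns `b` to `v`. -/
def SatLit (σ : Assignment) (l : Lit) : Prop := σ l.1 = l.2

/-- An assignment satisfies a clause iff it satisfies one of its literals. -/
def SatClause (σ : Assignment) (c : Clause) : Prop := ∃ l ∈ c, SatLit σ l

/-- An assignment satisfies a set of clauses iff it satisfies every clause in it. -/
def SatSet (σ : Assignment) (Γ : Set Clause) : Prop := ∀ c ∈ Γ, SatClause σ c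

/-- Entry `i` of trail `τ` is a decision: its level is positive and
no earlier entry has the same level. -/
def IsDecision (τ : Trail) (i : Fin τ.length) : Prop :=
  0 < (τ.get i).2 ∧ ∀ j : Fin τ.length, j < i → (τ.get j).2 ≠ (τ.get i).2

/-- `τ` is a trail for the input CNF `I`. -/
structure IsTrail (I : Finset Clause) (τ : Trail) : Prop where
  nodupVars : (τ.map (fun e => e.1.1)).Nodup
  levelsMono : (τ.map Prod.snd).Pairwise (· ≤ ·)
  implied : ∀ i : Fin τ.length, ¬ IsDecision τ i →
    ∀ σ : Assignment, SatSet σ ↑I →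
      (∀ j : Fin τ.length, j < i → IsDecision τ j → SatLit σ (τ.get j).1) →
      SatLit σ (τ.get i).1

/-- `τ^{≤d}`: the longest prefix of `τ` whose entries all have level `≤ d`. -/
def Trail.upTo (τ : Trail) (d : ℕ) : Trail := τ.takeWhile (fun e => e.2 ≤ d)

/-- An assignment satisfies (the literal of) every entry of a trail. -/
def SatTrail (σ : Assignment) (τ : Trail) : Prop := ∀ e ∈ τ, SatLit σ e.1

/-- `Γ →^d Δ` relative to `τ`. -/
def ImpliesAt (τ : Trail) (d : ℕ) (Γ Δ : Set Clause) : Prop :=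
  ∀ σ : Assignment, SatTrail σ (τ.upTo d) → SatSet σ Γ → SatSet σ Δ

/-- `Γ ↔^d Δ` relative to `τ`. -/
def EquivAt (τ : Trail) (d : ℕ) (Γ Δ : Set Clause) : Prop :=
  ImpliesAt τ d Γ Δ ∧ ImpliesAt τ d Δ Γ

/-- `α^{≤d}`: literals of `α` whose negation is not the literal of any entry of `τ^{≤d}`. -/
def Clause.upTo (τ : Trail) (d : ℕ) (α : Clause) : Clause :=
  α.filter (fun l => ∀ e ∈ τ.upTo d, e.1 ≠ Lit.neg l)

/-- `α` d-subsumes `β` (relative to `τ`). -/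
def SubsumesAt (τ : Trail) (d : ℕ) (α β : Clause) : Prop :=
  Clause.upTo τ d α ⊆ Clause.upTo τ d β

/-- `α` min-k-subsumes `β` (relative to `τ`). -/
def MinSubsumesAt (τ : Trail) (k : ℕ) (α β : Clause) : Prop :=
  SubsumesAt τ k α β ∧ ∀ d' < k, ¬ SubsumesAt τ d' α β

/-- `α` and `β` are resolvable on `x`. -/
def Resolvable (α β : Clause) (x : Var) : Prop := (x, true) ∈ α ∧ (x, false) ∈ β

/-- The resolveOn `α ⊗ₓ β`. -/
def resolveOn (α β : Clause) (x : Var) : Clause := α.erase (x, true) ∪ β.erase (x, false)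

/-- A clause state: groups `Dᵢ` (meaningful for `i ≤ n`), temporary clauses `D∞`,
and stashed groups `Sᵢ^q` (meaningful for `q < i ≤ n`). -/
structure ClauseState where
  D : ℕ → Set Clause
  Dinf : Set Clause
  Stash : ℕ → ℕ → Set Clause

/-- `Sᵢ := ⋃_{q<i} Sᵢ^q`. -/
def ClauseState.Sl (st : ClauseState) (i : ℕ) : Set Clause :=
  {α | ∃ q < i, α ∈ st.Stash i q}

/-- `S := ⋃_{1≤i≤n} Sᵢ`. -/
def ClauseState.Sall (st : ClauseState) (n : ℕ) : Set Clause :=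
  {α | ∃ i, 1 ≤ i ∧ i ≤ n ∧ α ∈ st.Sl i}

/-- `S⁰ := ⋃_{0<i≤n} Sᵢ^0`. -/
def ClauseState.S0 (st : ClauseState) (n : ℕ) : Set Clause :=
  {α | ∃ i, 0 < i ∧ i ≤ n ∧ α ∈ st.Stash i 0}

/-- The pervasive clauses `P := D₀ ∪ S⁰`. -/
def ClauseState.P (st : ClauseState) (n : ℕ) : Set Clause := st.D 0 ∪ st.S0 n

/-- The active-non-temporary clauses `N := ⋃_{0≤i≤n} Dᵢ`. -/
def ClauseState.N (st : ClauseState) (n : ℕ) : Set Clause := {α | ∃ i ≤ n, α ∈ st.D i}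

/-- The active clauses `A := N ∪ D∞`. -/
def ClauseState.A (st : ClauseState) (n : ℕ) : Set Clause := st.N n ∪ st.Dinf

/-- Inv1 (input-equivalence): `I ↔⁰ P`. -/
def Inv1 (I : Finset Clause) (τ : Trail) (st : ClauseState) (n : ℕ) : Prop :=
  EquivAt τ 0 ↑I (st.P n)

/-- Inv2 (correctness): `N ↔ⁿ P`. -/
def Inv2 (τ : Trail) (st : ClauseState) (n : ℕ) : Prop :=
  EquivAt τ n (st.N n) (st.P n)

/-- The representation condition on a clause `α` stashed at level `i`. -/
def Represented (τ : Trail) (st : ClauseState) (n i : ℕ) (α : Clause) : Prop :=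
  (∃ r ≤ i, ∃ β ∈ st.D r, ImpliesAt τ i {β} {α}) ∨
  (∃ r ≤ i, ∃ j, i < j ∧ j ≤ n ∧ ∃ β ∈ st.Stash j r, ImpliesAt τ i {β} {α}) ∨
  ImpliesAt τ i ∅ {α}

/-- Inv3 (representation). -/
def Inv3 (τ : Trail) (st : ClauseState) (n : ℕ) : Prop :=
  ∀ i, 1 ≤ i → i ≤ n → ∀ α ∈ st.Sl i, Represented τ st n i α

/-- Inv4 (closure): every active or stashed clause is 0-implied by `P`. -/
def Inv4 (τ : Trail) (st : ClauseState) (n : ℕ) : Prop :=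
  ∀ γ ∈ st.A n ∪ st.Sall n, ImpliesAt τ 0 (st.P n) {γ}

/-- All four BI invariants. -/
def Invs (I : Finset Clause) (τ : Trail) (st : ClauseState) (n : ℕ) : Prop :=
  Inv1 I τ st n ∧ Inv2 τ st n ∧ Inv3 τ st n ∧ Inv4 τ st n


lemma mem_takeWhile_mono {α : Type*} {p q : α → Bool} (h : ∀ a, p a = true → q a = true) :
    ∀ (l : List α) (x : α), x ∈ l.takeWhile p → x ∈ l.takeWhile q := by
  intro l
  induction l with
  | nil => intro x hx; simp [List.takeWhile] at hx
  | cons a l ih =>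
    intro x hx
    by_cases hp : p a = true
    · rw [List.takeWhile_cons_of_pos hp] at hx
      rw [List.takeWhile_cons_of_pos (h a hp)]
      rcases List.mem_cons.1 hx with h1 | h1
      · exact List.mem_cons.2 (Or.inl h1)
      · exact List.mem_cons.2 (Or.inr (ih x h1))
    · rw [List.takeWhile_cons_of_neg hp] at hx
      simp at hx

lemma satTrail_mono {σ : Assignment} {τ : Trail} {i j : ℕ} (hij : i ≤ j)
    (h : SatTrail σ (τ.upTo j)) : SatTrail σ (τ.upTo i) := by
  intro e he
  exact h e (mem_takeWhile_mono (fun a ha => by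
    simp only [decide_eq_true_eq] at ha ⊢; omega) τ e he)

lemma impliesAt_mono {τ : Trail} {i j : ℕ} (hij : i ≤ j) {Γ Δ : Set Clause}
    (h : ImpliesAt τ i Γ Δ) : ImpliesAt τ j Γ Δ := by
  intro σ hT hΓ
  exact h σ (satTrail_mono hij hT) hΓ

/-- the representation invariant Inv3 and the closure invariant Inv4
imply the correctness invariant Inv2, i.e. `N ↔ⁿ P`. -/
theorem stmt4 (I : Finset Clause) (τ : Trail) (hτ : IsTrail I τ)
    (st : ClauseState) (n : ℕ) (h3 : Inv3 τ st n) (h4 : Inv4 τ st n) :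
    Inv2 τ st n := by
  have key : ∀ k i, 1 ≤ i → i ≤ n → n ≤ i + k → ∀ α ∈ st.Sl i,
      ImpliesAt τ n (st.N n) {α} := by
    intro k
    induction k with
    | zero =>
      intro i h1 h2 h0 α hα
      rcases h3 i h1 h2 α hα with ⟨r, hr, β, hβ, himp⟩ | ⟨r, hr, j, hij, hjn, β, hβ, himp⟩ | himp
      · intro σ hT hN
        exact impliesAt_mono h2 himp σ hT (fun c hc => by
          rw [Set.mem_singleton_iff] at hc; rw [hc]
          exact hN β ⟨r, le_trans hr h2, hβ⟩)
      · omega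
      · intro σ hT _
        exact impliesAt_mono h2 himp σ hT (fun c hc => by simp at hc)
    | succ k ih =>
      intro i h1 h2 h0 α hα
      rcases h3 i h1 h2 α hα with ⟨r, hr, β, hβ, himp⟩ | ⟨r, hr, j, hij, hjn, β, hβ, himp⟩ | himp
      · intro σ hT hN
        exact impliesAt_mono h2 himp σ hT (fun c hc => by
          rw [Set.mem_singleton_iff] at hc; rw [hc]
          exact hN β ⟨r, le_trans hr h2, hβ⟩)
      · have hβSl : β ∈ st.Sl j := ⟨r, by omega, hβ⟩
        have hNβ := ih j (by omega) hjn (by omega) β hβSl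
        intro σ hT hN
        exact impliesAt_mono h2 himp σ hT (fun c hc => by
          rw [Set.mem_singleton_iff] at hc; rw [hc]
          exact hNβ σ hT hN β rfl)
      · intro σ hT _
        exact impliesAt_mono h2 himp σ hT (fun c hc => by simp at hc)
  constructor
  · -- N →ⁿ P
    intro σ hT hN c hc
    rcases hc with hc | ⟨i, hi0, hin, hst⟩
    · exact hN c ⟨0, Nat.zero_le n, hc⟩
    · exact key n i hi0 hin (by omega) c ⟨0, hi0, hst⟩ σ hT hN c rfl
  · -- P →ⁿ N
    intro σ hT hP c hc
    exact h4 c (Or.inl (Or.inl hc)) σ (satTrail_mono (Nat.zero_le n) hT) hP c rfl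
end

section
/- Let i ≥ 1 and let a clause state with bound i (relative to a CNF I and a trail τ) satisfy Inv1, Inv3, and Inv4. Form a state with bound i − 1 by: deleting all clauses of Dᵢ; for each q < i, adding all clauses of Sᵢ^q to D_q (restoring them); and keeping D_j for j < i, D∞, and S_j^q for q < j < i otherwise unchanged. Then the resulting state with bound i − 1 satisfies Inv1, Inv2, Inv3, and Inv4 (with n = i − 1 in Inv2 and Inv3). -/
lemma takeWhile_mem_mono {α : Type*} {p q : α → Bool} (hpq : ∀ a, p a = true → q a = true) :
    ∀ (l : List α), ∀ a ∈ l.takeWhile p, a ∈ l.takeWhile q := by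
  intro l
  induction l with
  | nil => simp
  | cons x xs ih =>
    intro a ha
    by_cases hp : p x = true
    · rw [List.takeWhile_cons_of_pos hp] at ha
      rw [List.takeWhile_cons_of_pos (hpq x hp)]
      rcases List.mem_cons.mp ha with h | h
      · exact h ▸ List.mem_cons_self
      · exact List.mem_cons_of_mem _ (ih a h)
    · rw [List.takeWhile_cons_of_neg (by simpa using hp)] at ha
      simp at ha

lemma SatTrail.mono_upTo {σ : Assignment} {τ : Trail} {d d' : ℕ} (h : d ≤ d')
    (hs : SatTrail σ (τ.upTo d')) : SatTrail σ (τ.upTo d) := by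
  intro e he
  exact hs e (takeWhile_mem_mono (fun a ha => by simp_all; omega) τ e he)

lemma ImpliesAt.mono_d {τ : Trail} {Γ Δ : Set Clause} {d d' : ℕ} (h : d ≤ d')
    (hi : ImpliesAt τ d Γ Δ) : ImpliesAt τ d' Γ Δ :=
  fun σ hσ hg => hi σ (SatTrail.mono_upTo h hσ) hg

lemma ImpliesAt.comp {τ : Trail} {d : ℕ} {Γ : Set Clause} {β α : Clause}
    (h1 : ImpliesAt τ d Γ {β}) (h2 : ImpliesAt τ d {β} {α}) :
    ImpliesAt τ d Γ {α} := fun σ hσ hg => h2 σ hσ (h1 σ hσ hg)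

lemma ImpliesAt.of_mem {τ : Trail} {d : ℕ} {Γ : Set Clause} {α : Clause} (h : α ∈ Γ) :
    ImpliesAt τ d Γ {α} :=
  fun _ _ hg c hc => hg c (Set.mem_singleton_iff.mp hc ▸ h)

/-- one-step backtrack from bound `i ≥ 1` to bound `i - 1` (delete `D_i`,
restore each `S_i^q` into `D_q`, keep everything else) preserves all BI invariants. -/
theorem stmt8 (I : Finset Clause) (τ : Trail) (hτ : IsTrail I τ)
    (st : ClauseState) (i : ℕ) (hi : 1 ≤ i)
    (h1 : Inv1 I τ st i) (h3 : Inv3 τ st i) (h4 : Inv4 τ st i)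
    (st' : ClauseState)
    (hD : st'.D = fun q => if q < i then st.D q ∪ st.Stash i q else ∅)
    (hDinf : st'.Dinf = st.Dinf)
    (hS : st'.Stash = fun j q => if j < i then st.Stash j q else ∅) :
    Invs I τ st' (i - 1) := by
  -- P is unchanged
  have hP : st'.P (i - 1) = st.P i := by
    ext α
    simp only [ClauseState.P, ClauseState.S0, hD, hS, Set.mem_union, Set.mem_setOf_eq]
    constructor
    · rintro (h | ⟨j, hj0, hji, hmem⟩)
      · rw [if_pos (by omega)] at h
        rcases h with h | h
        · exact Or.inl h
        · exact Or.inr ⟨i, by omega, le_refl i, h⟩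
      · rw [if_pos (by omega)] at hmem
        exact Or.inr ⟨j, hj0, by omega, hmem⟩
    · rintro (h | ⟨j, hj0, hji, hmem⟩)
      · exact Or.inl (by rw [if_pos (by omega)]; exact Or.inl h)
      · by_cases hji' : j = i
        · subst hji'
          exact Or.inl (by rw [if_pos (by omega)]; exact Or.inr hmem)
        · exact Or.inr ⟨j, hj0, by omega, by rw [if_pos (by omega)]; exact hmem⟩
  -- new active/stashed clauses are old active/stashed clauses
  have hsub : st'.A (i - 1) ∪ st'.Sall (i - 1) ⊆ st.A i ∪ st.Sall i := by
    rintro γ (hγ | hγ)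
    · rcases hγ with hγ | hγ
      · obtain ⟨q, hq, hmem⟩ := hγ
        simp only [hD] at hmem
        rw [if_pos (by omega)] at hmem
        rcases hmem with hmem | hmem
        · exact Or.inl (Or.inl ⟨q, by omega, hmem⟩)
        · exact Or.inr ⟨i, hi, le_refl i, q, by omega, hmem⟩
      · rw [hDinf] at hγ
        exact Or.inl (Or.inr hγ)
    · obtain ⟨j, hj1, hj2, q, hq, hmem⟩ := hγ
      simp only [hS] at hmem
      rw [if_pos (by omega)] at hmem
      exact Or.inr ⟨j, hj1, by omega, q, hq, hmem⟩
  -- key lemma: stashed clauses at levels ≤ i-1 are (i-1)-implied by the new N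
  have hkey : ∀ k j, i - j ≤ k → 1 ≤ j → j ≤ i - 1 → ∀ α ∈ st.Sl j,
      ImpliesAt τ (i - 1) (st'.N (i - 1)) {α} := by
    intro k
    induction k with
    | zero => intro j hk _ hj2 _ _; omega
    | succ k ih =>
      intro j hk hj1 hj2 α hα
      rcases h3 j hj1 (by omega) α hα with ⟨r, hr, β, hβ, himp⟩ |
        ⟨r, hr, j', hjj', hj'i, β, hβ, himp⟩ | himp
      · refine ImpliesAt.comp (ImpliesAt.of_mem ?_) (himp.mono_d (by omega))
        exact ⟨r, by omega, by simp only [hD]; rw [if_pos (by omega)]; exact Or.inl hβ⟩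
      · by_cases hj'' : j' = i
        · subst hj''
          refine ImpliesAt.comp (ImpliesAt.of_mem ?_) (himp.mono_d (by omega))
          exact ⟨r, by omega, by simp only [hD]; rw [if_pos (by omega)]; exact Or.inr hβ⟩
        · have hβS : β ∈ st.Sl j' := ⟨r, by omega, hβ⟩
          exact ImpliesAt.comp (ih j' (by omega) (by omega) (by omega) β hβS)
            (himp.mono_d (by omega))
      · exact fun σ hσ _ => (himp.mono_d (by omega)) σ hσ (by intro c hc; simp at hc)
  refine ⟨?_, ?_, ?_, ?_⟩
  · -- Inv1
    rw [Inv1, hP]; exact h1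
  · -- Inv2
    constructor
    · -- N' →^{i-1} P'
      rw [hP]
      intro σ hσ hN c hc
      rcases hc with hc | ⟨j, hj0, hji, hmem⟩
      · exact hN c ⟨0, by omega, by simp only [hD]; rw [if_pos (by omega)]; exact Or.inl hc⟩
      · by_cases hji' : j = i
        · subst hji'
          exact hN c ⟨0, by omega, by simp only [hD]; rw [if_pos (by omega)]; exact Or.inr hmem⟩
        · have := hkey (i - j) j (le_refl _) hj0 (by omega) c ⟨0, hj0, hmem⟩
          exact this σ hσ hN c rfl
    · -- P' →^{i-1} N'
      intro σ hσ hPs c hc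
      have hcA : c ∈ st.A i ∪ st.Sall i := hsub (Or.inl (Or.inl hc))
      have h0 := (h4 c hcA).mono_d (by omega : (0:ℕ) ≤ i - 1)
      rw [← hP] at h0
      exact h0 σ hσ hPs c rfl
  · -- Inv3
    intro j hj1 hj2 α hα
    have hα' : α ∈ st.Sl j := by
      obtain ⟨q, hq, hmem⟩ := hα
      simp only [hS] at hmem; rw [if_pos (by omega)] at hmem
      exact ⟨q, hq, hmem⟩
    rcases h3 j hj1 (by omega) α hα' with ⟨r, hr, β, hβ, himp⟩ |
      ⟨r, hr, j', hjj', hj'i, β, hβ, himp⟩ | himp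
    · exact Or.inl ⟨r, hr, β, by simp only [hD]; rw [if_pos (by omega)]; exact Or.inl hβ, himp⟩
    · by_cases hj'' : j' = i
      · subst hj''
        exact Or.inl ⟨r, hr, β, by simp only [hD]; rw [if_pos (by omega)]; exact Or.inr hβ, himp⟩
      · refine Or.inr (Or.inl ⟨r, hr, j', hjj', by omega, β, ?_, himp⟩)
        simp only [hS]; rw [if_pos (by omega)]; exact hβ
    · exact Or.inr (Or.inr himp)
  · -- Inv4
    intro γ hγ
    rw [hP]
    exact h4 γ (hsub hγ)
end

section
/- Let τ be a trail for a CNF formula I, let n ∈ ℕ, and define a clause state with bound n by: D₀ := { α^{≤0} : α ∈ I and α is not satisfied at level 0 }, Dᵢ := ∅ for all 1 ≤ i ≤ n, Sᵢ^q := ∅ for all 0 ≤ q < i ≤ n, and D∞ any set of clauses such that D₀ →⁰ {γ} for every γ ∈ D∞. Then this state satisfies Inv1, Inv2, Inv3, and Inv4; in particular, the standard level-0 simplifications (deleting globally satisfied clauses and removing globally falsified literals) preserve 0-equivalence with the input: I ↔⁰ D₀. -/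
/-- the initial state (level-0-simplified input clauses in `D₀`, all other
groups empty, temporaries 0-implied by `D₀`) satisfies all BI invariants; in particular
the standard level-0 simplifications preserve 0-equivalence with the input. -/
theorem stmt12 (I : Finset Clause) (τ : Trail) (hτ : IsTrail I τ) (n : ℕ)
    (D0 : Set Clause)
    (hD0 : D0 = {β | ∃ α ∈ I, ¬ ImpliesAt τ 0 ∅ ({α} : Set Clause) ∧ β = Clause.upTo τ 0 α})
    (Dinf : Set Clause) (hDinf : ∀ γ ∈ Dinf, ImpliesAt τ 0 D0 ({γ} : Set Clause))
    (st : ClauseState)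
    (hD : st.D = fun i => if i = 0 then D0 else ∅)
    (hDi : st.Dinf = Dinf)
    (hSt : st.Stash = fun _ _ => ∅) :
    Invs I τ st n ∧ EquivAt τ 0 ↑I D0 := by
  have key : EquivAt τ 0 ↑I D0 := by
    constructor
    · intro σ hτ0 hI β hβ
      rw [hD0] at hβ
      obtain ⟨α, hα, -, rfl⟩ := hβ
      obtain ⟨l, hl, hsat⟩ := hI α (by simpa using hα)
      refine ⟨l, ?_, hsat⟩
      simp only [Clause.upTo, Finset.mem_filter]
      refine ⟨hl, fun e he hne => ?_⟩
      have h2 := hτ0 e he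
      rw [hne] at h2
      simp only [SatLit, Lit.neg] at h2 hsat
      rw [hsat] at h2
      exact Bool.not_ne_self _ h2.symm
    · intro σ hτ0 hD0sat α hα
      by_cases h : ImpliesAt τ 0 ∅ {α}
      · exact h σ hτ0 (fun c hc => absurd hc (Set.notMem_empty c)) α rfl
      · have hmem : Clause.upTo τ 0 α ∈ D0 := by
          rw [hD0]; exact ⟨α, by simpa using hα, h, rfl⟩
        obtain ⟨l, hl, hs⟩ := hD0sat _ hmem
        exact ⟨l, Finset.filter_subset _ _ hl, hs⟩
  have hP : st.P n = D0 := by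
    ext γ; simp [ClauseState.P, ClauseState.S0, hSt, hD]
  have hN : st.N n = D0 := by
    ext γ
    simp only [ClauseState.N, hD, Set.mem_setOf_eq]
    constructor
    · rintro ⟨i, -, hγ⟩
      by_cases hi : i = 0
      · simpa [hi] using hγ
      · simp [hi] at hγ
    · intro hγ; exact ⟨0, Nat.zero_le _, by simpa using hγ⟩
  have hrefl : ∀ d (Γ : Set Clause), ImpliesAt τ d Γ Γ := fun d Γ σ _ h => h
  refine ⟨⟨?_, ?_, ?_, ?_⟩, key⟩
  · rw [Inv1, hP]; exact key
  · rw [Inv2, hP, hN]; exact ⟨hrefl n D0, hrefl n D0⟩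
  · intro i h1 h2 α hα
    rcases hα with ⟨q, -, hq⟩
    simp [hSt] at hq
  · intro γ hγ
    rw [hP]
    rcases hγ with hγ | hγ
    · rcases hγ with hγ | hγ
      · rw [hN] at hγ
        intro σ _ hs c hc
        rw [Set.mem_singleton_iff] at hc
        exact hc ▸ hs γ hγ
      · rw [hDi] at hγ
        exact hDinf γ hγ
    · rcases hγ with ⟨i, -, -, q, -, hq⟩
      simp [hSt] at hq
end

section
/- Let α and β be clauses resolvable on a variable x such that α ⊗ₓ β ⊆ β (α selfsumes β on x). Then a total assignment satisfies both α and β if and only if it satisfies both α and α ⊗ₓ β; hence the sets of clauses {α, β} and {α, α ⊗ₓ β} are logically equivalent, and β may be strengthened to α ⊗ₓ β in the presence of α. -/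
/-- if `α` selfsumes `β` on `x` (i.e. `α ⊗ₓ β ⊆ β`), then an assignment
satisfies both `α` and `β` iff it satisfies both `α` and `α ⊗ₓ β`; hence `{α, β}` and
`{α, α ⊗ₓ β}` are logically equivalent. -/
theorem stmt15 (α β : Clause) (x : Var) (hres : Resolvable α β x)
    (hsub : resolveOn α β x ⊆ β) :
    (∀ σ : Assignment,
      (SatClause σ α ∧ SatClause σ β) ↔ (SatClause σ α ∧ SatClause σ (resolveOn α β x))) ∧
    (∀ σ : Assignment,
      SatSet σ ({α, β} : Set Clause) ↔ SatSet σ ({α, resolveOn α β x} : Set Clause)) := by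
  have key : ∀ σ : Assignment,
      (SatClause σ α ∧ SatClause σ β) ↔ (SatClause σ α ∧ SatClause σ (resolveOn α β x)) := by
    intro σ
    constructor
    · rintro ⟨hA, lb, hlb, hsb⟩
      refine ⟨hA, ?_⟩
      by_cases h : lb = (x, false)
      · subst h
        obtain ⟨la, hla, hsa⟩ := hA
        refine ⟨la, ?_, hsa⟩
        have : la ≠ (x, true) := by
          rintro rfl
          simp [SatLit] at hsa hsb
          rw [hsa] at hsb; exact Bool.true_eq_false.mp hsb
        exact Finset.mem_union_left _ (Finset.mem_erase.mpr ⟨this, hla⟩)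
      · exact ⟨lb, Finset.mem_union_right _ (Finset.mem_erase.mpr ⟨h, hlb⟩), hsb⟩
    · rintro ⟨hA, l, hl, hs⟩
      exact ⟨hA, l, hsub hl, hs⟩
  refine ⟨key, fun σ => ?_⟩
  have h := key σ
  constructor
  · intro h2 c hc
    simp only [Set.mem_insert_iff, Set.mem_singleton_iff] at hc
    have ha : SatClause σ α := h2 α (Or.inl rfl)
    have hb : SatClause σ β := h2 β (Or.inr rfl)
    rcases hc with rfl | rfl
    · exact ha
    · exact (h.mp ⟨ha, hb⟩).2
  · intro h2 c hc
    simp only [Set.mem_insert_iff, Set.mem_singleton_iff] at hc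
    have ha : SatClause σ α := h2 α (Or.inl rfl)
    have hr : SatClause σ (resolveOn α β x) := h2 _ (Or.inr rfl)
    rcases hc with rfl | rfl
    · exact ha
    · exact (h.mpr ⟨ha, hr⟩).2
end

section
/- Let τ be a trail for a CNF formula I, let α and β be clauses resolvable on a variable x, and let d ∈ ℕ. If α d-selfsumes β on x (i.e., (α ⊗ₓ β)^{≤d} ⊆ β^{≤d}), then {α, β} ↔^d {α, α ⊗ₓ β}: relative to the trail at level d, replacing β by the resolvent α ⊗ₓ β in the presence of α is sound in both directions. -/
/-- if `α` d-selfsumes `β` on `x`, then `{α, β} ↔^d {α, α ⊗ₓ β}`. -/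
theorem stmt16 (I : Finset Clause) (τ : Trail) (hτ : IsTrail I τ)
    (α β : Clause) (x : Var) (hres : Resolvable α β x) (d : ℕ)
    (hss : Clause.upTo τ d (resolveOn α β x) ⊆ Clause.upTo τ d β) :
    EquivAt τ d ({α, β} : Set Clause) ({α, resolveOn α β x} : Set Clause) := by
  constructor
  · intro σ htr hΓ γ hγ
    rcases hγ with rfl | hγ
    · exact hΓ _ (Or.inl rfl)
    · rcases Set.mem_singleton_iff.mp hγ with rfl
      obtain ⟨la, hla, hsla⟩ := hΓ α (Or.inl rfl)
      obtain ⟨lb, hlb, hslb⟩ := hΓ β (Or.inr rfl)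
      by_cases hx : σ x = true
      · refine ⟨lb, ?_, hslb⟩
        refine Finset.mem_union_right _ (Finset.mem_erase.mpr ⟨?_, hlb⟩)
        rintro rfl
        simp [SatLit, hx] at hslb
      · refine ⟨la, ?_, hsla⟩
        refine Finset.mem_union_left _ (Finset.mem_erase.mpr ⟨?_, hla⟩)
        rintro rfl
        simp [SatLit] at hsla
        exact hx hsla
  · intro σ htr hΓ γ hγ
    rcases hγ with rfl | hγ
    · exact hΓ _ (Or.inl rfl)
    · rw [Set.mem_singleton_iff.mp hγ]
      obtain ⟨l, hl, hsl⟩ := hΓ (resolveOn α β x) (Or.inr rfl)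
      by_cases hup : l ∈ Clause.upTo τ d (resolveOn α β x)
      · have := hss hup
        exact ⟨l, (Finset.mem_filter.mp this).1, hsl⟩
      · exfalso
        simp only [Clause.upTo, Finset.mem_filter, hl, true_and, not_forall] at hup
        obtain ⟨e, he, hne⟩ := hup
        push_neg at hne
        have := htr e he
        rw [hne] at this
        simp [SatLit, Lit.neg] at this hsl
        rw [hsl] at this
        exact (Bool.not_ne_self _ this.symm).elim
end
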